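/- arXiv:2604.02475 — 2 statements merged into one kernel-verified Lean document; each statement's English description precedes it below -/
import Mathlib

section
/- For every integer k ≥ 1, A(k) = 4 Σ_{s=k+1}^{∞} H_{s-1}/s³ − Σ_{s=k+1}^{∞} 1/s⁴, where A(k) = Σ_{1≤m,n≤k, m+n≥k+1} 1/(m²n²) and H_n is the n-th harmonic number. -/
/-!
Passing from `k` to `k + 1` adds row and column `k + 1` to the summation region and removes
the antidiagonal `m + n = k + 1`. The partial fraction decomposition
`1/(a²b²) = (1/a² + 1/b²)/(a+b)² + 2(1/a + 1/b)/(a+b)³` evaluates the antidiagonal sum, and the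
terms `Σ 1/m²` cancel, leaving `A k - A (k + 1) = 4 H_k/(k+1)³ - 1/(k+1)⁴`. Since
`A k ≤ H_k²/k → 0`, the differences telescope to `A k`.
-/

noncomputable def A (k : ℕ) : ℝ :=
  ∑ p ∈ (((Finset.Icc 1 k) ×ˢ (Finset.Icc 1 k)).filter
      (fun p => k + 1 ≤ p.1 + p.2)),
    1 / ((p.1 : ℝ) ^ 2 * (p.2 : ℝ) ^ 2)

noncomputable def H (n : ℕ) : ℝ := ∑ m ∈ Finset.Icc 1 n, 1 / (m : ℝ)

open Finset Filter Topology

section UpperTriangle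

variable {R : Type*} [CommRing R]

def upperTriangleSum (f : ℕ → R) (k : ℕ) : R :=
  ∑ p ∈ (Icc 1 k ×ˢ Icc 1 k).filter (fun p => k + 1 ≤ p.1 + p.2), f p.1 * f p.2

theorem upperTriangleSum_eq_sum_sum (f : ℕ → R) (k : ℕ) :
    upperTriangleSum f k = ∑ m ∈ Icc 1 k, ∑ n ∈ Icc (k + 1 - m) k, f m * f n := by
  rw [upperTriangleSum, sum_filter, sum_product]
  refine sum_congr rfl fun m hm => ?_
  rw [← sum_filter]
  refine sum_congr (ext fun n => ?_) fun _ _ => rfl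
  simp only [mem_Icc, mem_filter] at hm ⊢
  omega

theorem upperTriangleSum_succ (f : ℕ → R) (k : ℕ) :
    upperTriangleSum f (k + 1) = upperTriangleSum f k - ∑ m ∈ Icc 1 k, f m * f (k + 1 - m)
      + f (k + 1) * (2 * ∑ m ∈ Icc 1 k, f m + f (k + 1)) := by
  have hrow : ∀ m ∈ Icc 1 k, ∑ n ∈ Icc (k + 1 + 1 - m) (k + 1), f m * f n
      = ∑ n ∈ Icc (k + 1 - m) k, f m * f n - f m * f (k + 1 - m) + f m * f (k + 1) := by
    intro m hm
    rw [mem_Icc] at hm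
    have hlow : Icc (k + 1 - m) k = insert (k + 1 - m) (Icc (k + 1 + 1 - m) k) := by
      ext n; simp only [mem_insert, mem_Icc]; omega
    rw [hlow, sum_insert (by simp only [mem_Icc]; omega), sum_Icc_succ_top (by omega)]
    ring
  rw [upperTriangleSum_eq_sum_sum, upperTriangleSum_eq_sum_sum, sum_Icc_succ_top (by omega),
    sum_congr rfl hrow, Nat.add_sub_cancel_left, sum_Icc_succ_top (by omega),
    sum_add_distrib, sum_sub_distrib, ← sum_mul, ← mul_sum]
  ring

end UpperTriangle

theorem sum_Icc_one_reflect {M : Type*} [AddCommMonoid M] (g : ℕ → M) (k : ℕ) :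
    ∑ m ∈ Icc 1 k, g (k + 1 - m) = ∑ m ∈ Icc 1 k, g m := by
  refine sum_nbij' (fun m => k + 1 - m) (fun m => k + 1 - m) ?_ ?_ ?_ ?_ fun _ _ => rfl <;>
    · intro m hm; simp only [mem_Icc] at hm ⊢; omega

theorem one_div_sq_mul_sq {K : Type*} [Field K] {a b : K} (ha : a ≠ 0) (hb : b ≠ 0)
    (hab : a + b ≠ 0) :
    1 / (a ^ 2 * b ^ 2)
      = (1 / a ^ 2 + 1 / b ^ 2) / (a + b) ^ 2 + 2 * (1 / a + 1 / b) / (a + b) ^ 3 := by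
  field_simp
  ring

theorem A_eq_upperTriangleSum (k : ℕ) : A k = upperTriangleSum (fun m => 1 / (m : ℝ) ^ 2) k :=
  sum_congr rfl fun _ _ => (one_div_mul_one_div _ _).symm

theorem sum_antidiagonal_one_div_sq_mul_one_div_sq (k : ℕ) :
    ∑ m ∈ Icc 1 k, 1 / (m : ℝ) ^ 2 * (1 / ((k + 1 - m : ℕ) : ℝ) ^ 2)
      = 2 * (∑ m ∈ Icc 1 k, 1 / (m : ℝ) ^ 2) / ((k : ℝ) + 1) ^ 2
        + 4 * H k / ((k : ℝ) + 1) ^ 3 := by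
  have hterm : ∀ m ∈ Icc 1 k, 1 / (m : ℝ) ^ 2 * (1 / ((k + 1 - m : ℕ) : ℝ) ^ 2)
      = (1 / (m : ℝ) ^ 2 + 1 / ((k + 1 - m : ℕ) : ℝ) ^ 2) / ((k : ℝ) + 1) ^ 2
        + 2 * (1 / (m : ℝ) + 1 / ((k + 1 - m : ℕ) : ℝ)) / ((k : ℝ) + 1) ^ 3 := by
    intro m hm
    rw [mem_Icc] at hm
    have hsum : (m : ℝ) + ((k + 1 - m : ℕ) : ℝ) = (k : ℝ) + 1 := by
      rw [← Nat.cast_add_one, ← Nat.cast_add]; congr 1; omega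
    rw [one_div_mul_one_div, ← hsum]
    exact one_div_sq_mul_sq (Nat.cast_ne_zero.2 (by omega)) (Nat.cast_ne_zero.2 (by omega))
      (by rw [hsum]; positivity)
  rw [sum_congr rfl hterm, sum_add_distrib, ← sum_div, ← sum_div, ← mul_sum, sum_add_distrib,
    sum_add_distrib, sum_Icc_one_reflect (fun n => 1 / (n : ℝ) ^ 2),
    sum_Icc_one_reflect (fun n => 1 / (n : ℝ)), H]
  ring

theorem A_sub_A_succ (k : ℕ) :
    A k - A (k + 1) = 4 * H k / ((k : ℝ) + 1) ^ 3 - 1 / ((k : ℝ) + 1) ^ 4 := by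
  rw [A_eq_upperTriangleSum, A_eq_upperTriangleSum, upperTriangleSum_succ,
    sum_antidiagonal_one_div_sq_mul_one_div_sq]
  push_cast
  field_simp
  ring

theorem H_le_natCast (n : ℕ) : H n ≤ n := by
  calc H n ≤ (Icc 1 n).card • (1 : ℝ) :=
        sum_le_card_nsmul _ _ _ fun m hm => div_le_one_of_le₀ (by simpa using (mem_Icc.1 hm).1)
          (Nat.cast_nonneg m)
    _ = n := by simp

theorem H_le_one_add_log (n : ℕ) : H n ≤ 1 + Real.log n := by
  have hH : H n = harmonic n := by simp [H, harmonic_eq_sum_Icc, one_div]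
  exact hH ▸ harmonic_le_one_add_log n

theorem A_le_sq_H_div (k : ℕ) : A k ≤ H k ^ 2 / k := by
  have hterm : ∀ p ∈ (Icc 1 k ×ˢ Icc 1 k).filter (fun p => k + 1 ≤ p.1 + p.2),
      1 / ((p.1 : ℝ) ^ 2 * (p.2 : ℝ) ^ 2) ≤ 1 / (p.1 : ℝ) * (1 / p.2) / k := by
    intro p hp
    simp only [mem_filter, mem_product, mem_Icc] at hp
    obtain ⟨⟨⟨hm, hmk⟩, hn, -⟩, hmn⟩ := hp
    have hm' : (1 : ℝ) ≤ p.1 := by exact_mod_cast hm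
    have hn' : (1 : ℝ) ≤ p.2 := by exact_mod_cast hn
    have hk : (0 : ℝ) < k := by exact_mod_cast (by omega : 0 < k)
    -- `(m - 1)(n - 1) ≥ 0` gives `mn ≥ m + n - 1 ≥ k`
    have hkmn : (k : ℝ) ≤ p.1 * p.2 := by
      have : (k : ℝ) + 1 ≤ p.1 + p.2 := by exact_mod_cast hmn
      nlinarith [mul_nonneg (sub_nonneg.2 hm') (sub_nonneg.2 hn')]
    rw [one_div_mul_one_div, div_div, ← mul_pow, sq]
    gcongr
  calc A k ≤ ∑ p ∈ (Icc 1 k ×ˢ Icc 1 k).filter (fun p => k + 1 ≤ p.1 + p.2),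
        1 / (p.1 : ℝ) * (1 / p.2) / k := sum_le_sum hterm
    _ ≤ ∑ p ∈ Icc 1 k ×ˢ Icc 1 k, 1 / (p.1 : ℝ) * (1 / p.2) / k :=
        sum_le_sum_of_subset_of_nonneg (filter_subset _ _) fun _ _ _ => by positivity
    _ = H k ^ 2 / k := by rw [← sum_div, sum_product, H, sq, sum_mul_sum]

theorem tendsto_one_add_log_sq_div_atTop :
    Tendsto (fun x : ℝ => (1 + Real.log x) ^ 2 / x) atTop (𝓝 0) := by
  have hlog (n : ℕ) := Real.tendsto_pow_log_div_mul_add_atTop 1 0 n one_ne_zero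
  simpa [add_sq, add_div, mul_div_assoc] using
    ((hlog 0).add ((hlog 1).const_mul 2)).add (hlog 2)

theorem tendsto_A_atTop : Tendsto A atTop (𝓝 0) := by
  refine squeeze_zero (fun k => sum_nonneg fun _ _ => by positivity) (fun k => ?_)
    (tendsto_one_add_log_sq_div_atTop.comp tendsto_natCast_atTop_atTop)
  refine (A_le_sq_H_div k).trans (div_le_div_of_nonneg_right ?_ (Nat.cast_nonneg k))
  exact pow_le_pow_left₀ (sum_nonneg fun _ _ => by positivity) (H_le_one_add_log k) 2

theorem summable_one_div_add_add_one_pow (k : ℕ) {p : ℕ} (hp : 1 < p) :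
    Summable fun n : ℕ => 1 / ((n : ℝ) + k + 1) ^ p :=
  ((summable_nat_add_iff (k + 1)).2 (Real.summable_one_div_nat_pow.2 hp)).congr fun n => by
    push_cast; ring_nf

theorem hasSum_sub_succ_of_tendsto {G : Type*} [AddCommGroup G] [TopologicalSpace G]
    [IsTopologicalAddGroup G] [T2Space G] {f : ℕ → G} {l : G}
    (hs : Summable fun n => f n - f (n + 1)) (hf : Tendsto f atTop (𝓝 l)) :
    HasSum (fun n => f n - f (n + 1)) (f 0 - l) := by
  rw [hs.hasSum_iff_tendsto_nat]
  simpa only [sum_range_sub'] using tendsto_const_nhds.sub hf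

theorem summable_H_add_div_pow_three (k : ℕ) :
    Summable fun n : ℕ => H (n + k) / ((n : ℝ) + k + 1) ^ 3 := by
  refine (summable_one_div_add_add_one_pow k one_lt_two).of_nonneg_of_le
    (fun n => div_nonneg (sum_nonneg fun _ _ => by positivity) (by positivity)) fun n => ?_
  have hH : H (n + k) ≤ (n : ℝ) + k + 1 := by
    have := H_le_natCast (n + k)
    push_cast at this
    linarith
  calc H (n + k) / ((n : ℝ) + k + 1) ^ 3 ≤ ((n : ℝ) + k + 1) / ((n : ℝ) + k + 1) ^ 3 := by
        gcongr
    _ = 1 / ((n : ℝ) + k + 1) ^ 2 := by field_simp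

theorem A_eq_tail_sums_general (k : ℕ) :
    A k = 4 * (∑' n : ℕ, H (n + k) / ((n : ℝ) + (k : ℝ) + 1) ^ 3)
        - ∑' n : ℕ, 1 / ((n : ℝ) + (k : ℝ) + 1) ^ 4 := by
  have hg := summable_H_add_div_pow_three k
  have hh := summable_one_div_add_add_one_pow k (p := 4) (by norm_num)
  have hdiff (n : ℕ) : A (n + k) - A (n + 1 + k)
      = 4 * (H (n + k) / ((n : ℝ) + k + 1) ^ 3) - 1 / ((n : ℝ) + k + 1) ^ 4 := by
    rw [Nat.add_right_comm, A_sub_A_succ]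
    push_cast
    ring
  have htel := hasSum_sub_succ_of_tendsto (f := fun n => A (n + k))
    (by simpa only [hdiff] using (hg.mul_left 4).sub hh)
    (tendsto_A_atTop.comp (tendsto_add_atTop_nat k))
  simp only [hdiff, zero_add, sub_zero] at htel
  rw [← htel.tsum_eq, (hg.mul_left 4).tsum_sub hh, tsum_mul_left]

theorem A_eq_tail_sums (k : ℕ) (hk : 1 ≤ k) :
    A k = 4 * (∑' n : ℕ, H (n + k) / ((n : ℝ) + (k : ℝ) + 1) ^ 3)
        - ∑' n : ℕ, 1 / ((n : ℝ) + (k : ℝ) + 1) ^ 4 :=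
  A_eq_tail_sums_general k
end

section
/- For every integer Q ≥ 2, |Σ_{d=1}^{Q} μ(d)·log(⌊Q/d⌋)/(d⁴⌊Q/d⌋²) − (6 log Q)/(π²Q²) + ζ'(2)/(Q²ζ(2)²)| ≤ (16(log Q)² + 12 log Q + 64)/Q³. -/
/-!
Put `F(d) = μ(d) (log Q - log d) / d²`. For `d ≤ Q` the `d`-th term of the sum equals
`μ(d)/d⁴ · g(⌊Q/d⌋)` with `g(x) = log x / x²`, while `F(d)/Q² = μ(d)/d⁴ · g(Q/d)`; as `g` moves by
`O((1 + log q)/q³)` between `⌊q⌋` and `q`, the two sums over `d ≤ Q` differ by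
`O((1 + log Q)/Q³) · Σ_{d ≤ Q} 1/d`. The full series `Σ_d F(d)` is
`log Q / ζ(2) - ζ'(2)/ζ(2)²`, because `L(μ, s) = 1/ζ(s)` and hence `L(μ log, s) = ζ'(s)/ζ(s)²`.
Its tail over `d > Q` is at most `4/Q`, from `log(d/Q) ≤ 2 √(d/Q)` and the telescoping bound
`d^(-3/2) ≤ 2 (1/√(d-1) - 1/√d)`.
-/

open ArithmeticFunction

noncomputable def zetaDeriv2 : ℝ := (deriv riemannZeta 2).re

open LSeries Real Finset
open scoped LSeries.notation ArithmeticFunction.Moebius Topology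

lemma LSeries_moebius_eq_inv_riemannZeta {s : ℂ} (hs : 1 < s.re) :
    L ↗μ s = (riemannZeta s)⁻¹ := by
  refine eq_inv_of_mul_eq_one_right ?_
  rw [← LSeries_zeta_eq_riemannZeta hs]
  exact LSeries_zeta_mul_Lseries_moebius hs

lemma LSeries_logMul_moebius_eq {s : ℂ} (hs : 1 < s.re) :
    L (logMul ↗μ) s = deriv riemannZeta s / riemannZeta s ^ 2 := by
  have hμ : abscissaOfAbsConv ↗μ < s.re := by
    rw [abscissaOfAbsConv_moebius]; exact_mod_cast hs
  have hL : L ↗μ =ᶠ[𝓝 s] fun z ↦ (riemannZeta z)⁻¹ := by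
    filter_upwards [(isOpen_lt continuous_const Complex.continuous_re).mem_nhds hs] with z hz
    exact LSeries_moebius_eq_inv_riemannZeta hz
  have hs1 : s ≠ 1 := by rintro rfl; norm_num at hs
  have hderiv := LSeries_deriv hμ
  rw [hL.deriv_eq, deriv_fun_inv'' (differentiableAt_riemannZeta hs1)
    (riemannZeta_ne_zero_of_one_lt_re hs), neg_div, neg_inj] at hderiv
  exact hderiv.symm

lemma term_ofReal_natCast (f : ℕ → ℝ) {k : ℕ} (hk : k ≠ 0) (n : ℕ) :
    term (fun n ↦ (f n : ℂ)) k n = ((f n / n ^ k : ℝ) : ℂ) := by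
  rcases eq_or_ne n 0 with rfl | hn
  · simp [hk]
  · rw [term_of_ne_zero hn, Complex.cpow_natCast]
    push_cast
    rfl

lemma LSeriesHasSum.hasSum_re_div_pow {f : ℕ → ℝ} {k : ℕ} (hk : k ≠ 0) {a : ℂ}
    (hf : LSeriesHasSum (fun n ↦ (f n : ℂ)) k a) : HasSum (fun n : ℕ ↦ f n / n ^ k) a.re := by
  simpa only [term_ofReal_natCast f hk, Complex.ofReal_re] using Complex.hasSum_re hf

lemma hasSum_moebius_div_sq : HasSum (fun n : ℕ ↦ (μ n : ℝ) / n ^ 2) (6 / π ^ 2) := by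
  have hsum : LSeriesSummable (fun n ↦ ((μ n : ℝ) : ℂ)) (2 : ℕ) := by
    simpa using LSeriesSummable_moebius_iff.mpr (by norm_num : 1 < (2 : ℂ).re)
  convert (hsum.LSeriesHasSum).hasSum_re_div_pow two_ne_zero using 1
  have := LSeries_moebius_eq_inv_riemannZeta (s := 2) (by norm_num)
  simp only [Complex.ofReal_intCast, Nat.cast_ofNat, this, riemannZeta_two]
  rw [show (π : ℂ) ^ 2 / 6 = ((π ^ 2 / 6 : ℝ) : ℂ) by push_cast; rfl, ← Complex.ofReal_inv,
    Complex.ofReal_re, inv_div]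

lemma hasSum_moebius_mul_log_div_sq :
    HasSum (fun n : ℕ ↦ (μ n : ℝ) * Real.log n / n ^ 2) (zetaDeriv2 / (π ^ 2 / 6) ^ 2) := by
  have hlog : (fun n : ℕ ↦ ((μ n * Real.log n : ℝ) : ℂ)) = logMul ↗μ := by
    ext n; rw [logMul, ← Complex.natCast_log]; push_cast; ring
  have hsum : LSeriesSummable (fun n : ℕ ↦ ((μ n * Real.log n : ℝ) : ℂ)) (2 : ℕ) := by
    rw [hlog]
    apply LSeriesSummable_logMul_of_lt_re
    rw [abscissaOfAbsConv_moebius]; norm_num; exact_mod_cast one_lt_two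
  convert (hsum.LSeriesHasSum).hasSum_re_div_pow two_ne_zero using 1
  rw [hlog, Nat.cast_ofNat, LSeries_logMul_moebius_eq (by norm_num), riemannZeta_two,
    show ((π : ℂ) ^ 2 / 6) ^ 2 = (((π ^ 2 / 6) ^ 2 : ℝ) : ℂ) by push_cast; rfl,
    Complex.div_ofReal_re, zetaDeriv2]

lemma hasSum_moebius_mul_log_sub_log_div_sq (Q : ℕ) :
    HasSum (fun d : ℕ ↦ (μ d : ℝ) * (Real.log Q - Real.log d) / (d : ℝ) ^ 2)
      (6 * Real.log Q / π ^ 2 - zetaDeriv2 / (π ^ 2 / 6) ^ 2) := by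
  have h := (hasSum_moebius_div_sq.mul_left (Real.log Q)).sub hasSum_moebius_mul_log_div_sq
  rw [show Real.log Q * (6 / π ^ 2) = 6 * Real.log Q / π ^ 2 by ring] at h
  refine (funext fun d ↦ ?_ : (fun d : ℕ ↦ (μ d : ℝ) * (Real.log Q - Real.log d) / (d : ℝ) ^ 2)
    = _) ▸ h
  ring

lemma abs_log_div_sq_sub_log_div_sq_le {x q : ℝ} (hx : 1 ≤ x) (hxq : x ≤ q) (hqx : q < x + 1) :
    |Real.log x / x ^ 2 - Real.log q / q ^ 2| ≤ (8 * Real.log q + 2) / q ^ 3 := by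
  have hx0 : 0 < x := by linarith
  have hq0 : 0 < q := by linarith
  have hlogx : 0 ≤ Real.log x := Real.log_nonneg hx
  have hlogxq : Real.log x ≤ Real.log q := Real.log_le_log hx0 hxq
  have hinv : 1 / x ^ 2 - 1 / q ^ 2 ≤ 8 / q ^ 3 := by
    rw [div_sub_div _ _ (by positivity) (by positivity),
      div_le_div_iff₀ (by positivity) (by positivity)]
    have hdiff : q ^ 2 - x ^ 2 ≤ 2 * q := by nlinarith
    -- `q < x + 1 ≤ 2 x`: the floor is at least half of `q`
    have hsq : q ^ 2 < 4 * x ^ 2 := by nlinarith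
    calc (1 * q ^ 2 - x ^ 2 * 1) * q ^ 3 ≤ 2 * q * q ^ 3 := by gcongr; linarith
      _ = 2 * q ^ 2 * q ^ 2 := by ring
      _ ≤ 8 * (x ^ 2 * q ^ 2) := by nlinarith [sq_nonneg q]
  have hinv0 : 0 ≤ 1 / x ^ 2 - 1 / q ^ 2 :=
    sub_nonneg.2 (one_div_le_one_div_of_le (by positivity) (by gcongr))
  have hlog : Real.log q - Real.log x ≤ 2 / q := by
    rw [← Real.log_div hq0.ne' hx0.ne']
    calc Real.log (q / x) ≤ q / x - 1 := Real.log_le_sub_one_of_pos (by positivity)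
      _ ≤ 2 / q := by rw [div_sub_one hx0.ne', div_le_div_iff₀ hx0 hq0]; nlinarith
  have hsplit : Real.log x / x ^ 2 - Real.log q / q ^ 2
      = Real.log x * (1 / x ^ 2 - 1 / q ^ 2) - (Real.log q - Real.log x) / q ^ 2 := by
    field_simp; ring
  have hbound : Real.log q * (8 / q ^ 3) + 2 / q / q ^ 2 = (8 * Real.log q + 2) / q ^ 3 := by
    field_simp
  rw [hsplit, ← hbound]
  apply abs_sub_le_of_nonneg_of_le
  · positivity
  · have : Real.log x * (1 / x ^ 2 - 1 / q ^ 2) ≤ Real.log q * (8 / q ^ 3) :=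
      mul_le_mul hlogxq hinv hinv0 (hlogx.trans hlogxq)
    have : 0 ≤ 2 / q / q ^ 2 := by positivity
    linarith
  · exact div_nonneg (by linarith) (by positivity)
  · have : (Real.log q - Real.log x) / q ^ 2 ≤ 2 / q / q ^ 2 := by gcongr
    have : 0 ≤ Real.log q * (8 / q ^ 3) := mul_nonneg (hlogx.trans hlogxq) (by positivity)
    linarith

lemma abs_moebius_floor_term_sub_le {Q d : ℕ} (hd : 1 ≤ d) (hdQ : d ≤ Q) :
    |(μ d : ℝ) * Real.log ((Q / d : ℕ) : ℝ) / ((d : ℝ) ^ 4 * ((Q / d : ℕ) : ℝ) ^ 2)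
      - (μ d : ℝ) * (Real.log Q - Real.log d) / (d : ℝ) ^ 2 / (Q : ℝ) ^ 2|
      ≤ (8 * Real.log Q + 2) / (d * (Q : ℝ) ^ 3) := by
  have hd0 : (0 : ℝ) < d := by exact_mod_cast hd
  have hQ0 : (0 : ℝ) < Q := by exact_mod_cast hd.trans hdQ
  obtain ⟨q, hq⟩ : ∃ q : ℝ, q = Q / d := ⟨_, rfl⟩
  have hfloor : ((Q / d : ℕ) : ℝ) = ⌊q⌋₊ := by rw [hq, Nat.floor_div_eq_div]
  have hm : (1 : ℝ) ≤ (Q / d : ℕ) := by exact_mod_cast (Nat.one_le_div_iff hd).2 hdQ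
  have hq1 : 1 ≤ q := hm.trans (hfloor ▸ Nat.floor_le (hq ▸ by positivity))
  have hqQ : q ≤ Q := hq ▸ div_le_self hQ0.le (by exact_mod_cast hd)
  have hlogq : Real.log q = Real.log Q - Real.log d := hq ▸ Real.log_div hQ0.ne' hd0.ne'
  have hfactor : (μ d : ℝ) * Real.log ((Q / d : ℕ) : ℝ) / ((d : ℝ) ^ 4 * ((Q / d : ℕ) : ℝ) ^ 2)
      - (μ d : ℝ) * (Real.log Q - Real.log d) / (d : ℝ) ^ 2 / (Q : ℝ) ^ 2
      = (μ d : ℝ) / (d : ℝ) ^ 4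
        * (Real.log ((Q / d : ℕ) : ℝ) / ((Q / d : ℕ) : ℝ) ^ 2 - Real.log q / q ^ 2) := by
    rw [← hlogq, hq]; field_simp
  have hcore := abs_log_div_sq_sub_log_div_sq_le hm (hfloor ▸ Nat.floor_le (by linarith))
    (hfloor ▸ Nat.lt_floor_add_one q)
  have hμ : |(μ d : ℝ)| ≤ 1 := by exact_mod_cast abs_moebius_le_one
  rw [hfactor, abs_mul, abs_div, abs_of_pos (by positivity : (0 : ℝ) < d ^ 4)]
  calc _ ≤ 1 / d ^ 4 * ((8 * Real.log q + 2) / q ^ 3) := by gcongr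
    _ = (8 * Real.log q + 2) / (d * (Q : ℝ) ^ 3) := by rw [hq]; field_simp
    _ ≤ (8 * Real.log Q + 2) / (d * (Q : ℝ) ^ 3) := by
      have := Real.log_nonneg hq1
      gcongr

lemma abs_sum_moebius_floor_sub_le (Q : ℕ) :
    |∑ d ∈ Icc 1 Q,
        ((μ d : ℝ) * Real.log ((Q / d : ℕ) : ℝ) / ((d : ℝ) ^ 4 * ((Q / d : ℕ) : ℝ) ^ 2)
          - (μ d : ℝ) * (Real.log Q - Real.log d) / (d : ℝ) ^ 2 / (Q : ℝ) ^ 2)|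
      ≤ (8 * Real.log Q + 2) * (1 + Real.log Q) / (Q : ℝ) ^ 3 := by
  have hL : 0 ≤ 8 * Real.log Q + 2 := by linarith [Real.log_natCast_nonneg Q]
  have hharmonic : ∑ d ∈ Icc 1 Q, (1 / d : ℝ) ≤ 1 + Real.log Q := by
    simpa [harmonic_eq_sum_Icc] using harmonic_le_one_add_log Q
  calc _ ≤ ∑ d ∈ Icc 1 Q, (8 * Real.log Q + 2) / (d * (Q : ℝ) ^ 3) := by
        refine (abs_sum_le_sum_abs _ _).trans (sum_le_sum fun d hd ↦ ?_)
        rw [mem_Icc] at hd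
        exact abs_moebius_floor_term_sub_le hd.1 hd.2
    _ = (8 * Real.log Q + 2) / (Q : ℝ) ^ 3 * ∑ d ∈ Icc 1 Q, (1 / d : ℝ) := by
        rw [mul_sum]; congr! 1 with d; field_simp
    _ ≤ (8 * Real.log Q + 2) / (Q : ℝ) ^ 3 * (1 + Real.log Q) := by gcongr
    _ = _ := by ring

lemma inv_mul_sqrt_le_two_mul_sub {x : ℝ} (hx : 0 < x) :
    1 / ((x + 1) * √(x + 1)) ≤ 2 * (1 / √x - 1 / √(x + 1)) := by
  obtain ⟨a, ha⟩ : ∃ a, a = √x := ⟨_, rfl⟩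
  obtain ⟨b, hb⟩ : ∃ b, b = √(x + 1) := ⟨_, rfl⟩
  have ha0 : 0 < a := ha ▸ Real.sqrt_pos.2 hx
  have hab : a ≤ b := ha ▸ hb ▸ Real.sqrt_le_sqrt (by linarith)
  have hb0 : 0 < b := ha0.trans_le hab
  have hx1 : x + 1 = b ^ 2 := by rw [hb, Real.sq_sqrt (by linarith)]
  have hconj : (b - a) * (b + a) = 1 := by
    have ha2 : a ^ 2 = x := by rw [ha, Real.sq_sqrt hx.le]
    linear_combination -hx1 - ha2
  have hdiff : 1 / a - 1 / b = 1 / (a * b * (b + a)) := by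
    field_simp
    linear_combination hconj
  rw [← ha, ← hb, hdiff, hx1, div_le_iff₀ (by positivity), mul_one_div,
    div_mul_eq_mul_div, le_div_iff₀ (by positivity)]
  nlinarith [mul_le_mul_of_nonneg_left hab hb0.le, mul_le_mul_of_nonneg_left hab ha0.le]

lemma abs_tsum_le_tsum_abs {ι : Type*} {f : ι → ℝ} (hf : Summable fun n ↦ |f n|) :
    |∑' n, f n| ≤ ∑' n, |f n| := by
  simpa using norm_tsum_le_tsum_norm (f := f) (by simpa using hf)

lemma sum_range_inv_mul_sqrt_le {x : ℝ} (hx : 0 < x) (n : ℕ) :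
    ∑ i ∈ range n, 1 / ((x + i + 1) * √(x + i + 1)) ≤ 2 / √x := by
  have hterm (i : ℕ) :
      1 / ((x + i + 1) * √(x + i + 1)) ≤ 2 / √(x + i) - 2 / √(x + (i + 1 : ℕ)) := by
    have := inv_mul_sqrt_le_two_mul_sub (x := x + i) (by positivity)
    rw [mul_sub, mul_one_div, mul_one_div] at this
    simpa only [Nat.cast_succ, ← add_assoc] using this
  calc _ ≤ ∑ i ∈ range n, (2 / √(x + i) - 2 / √(x + (i + 1 : ℕ))) :=
        sum_le_sum fun i _ ↦ hterm i
    _ = 2 / √x - 2 / √(x + n) := by simpa using sum_range_sub' (fun i : ℕ ↦ 2 / √(x + i)) n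
    _ ≤ 2 / √x := by
        have : 0 ≤ 2 / √(x + n) := by positivity
        linarith

lemma abs_moebius_mul_log_sub_log_div_sq_le {Q d : ℕ} (hQ : 0 < Q) (hQd : Q ≤ d) :
    |(μ d : ℝ) * (Real.log Q - Real.log d) / (d : ℝ) ^ 2| ≤ 2 / √Q * (1 / (d * √d)) := by
  have hQ0 : (0 : ℝ) < Q := by exact_mod_cast hQ
  have hd0 : (0 : ℝ) < d := by exact_mod_cast hQ.trans_le hQd
  have hμ : |(μ d : ℝ)| ≤ 1 := by exact_mod_cast abs_moebius_le_one
  have hlog : |Real.log Q - Real.log d| ≤ 2 * √d / √Q := by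
    rw [abs_sub_comm, ← Real.log_div hd0.ne' hQ0.ne', mul_div_assoc, ← Real.sqrt_div' _ hQ0.le,
      abs_of_nonneg (Real.log_nonneg ((one_le_div hQ0).2 (by exact_mod_cast hQd)))]
    calc Real.log (d / Q) ≤ (d / Q : ℝ) ^ (1 / 2 : ℝ) / (1 / 2) :=
          Real.log_le_rpow_div (by positivity) (by norm_num)
      _ = 2 * √(d / Q) := by rw [Real.sqrt_eq_rpow]; ring
  have hd : (d : ℝ) ^ 2 = d * √d * √d := by rw [mul_assoc, Real.mul_self_sqrt hd0.le]; ring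
  rw [abs_div, abs_mul, abs_of_pos (by positivity : (0 : ℝ) < d ^ 2)]
  calc |(μ d : ℝ)| * |Real.log Q - Real.log d| / d ^ 2 ≤ 1 * (2 * √d / √Q) / d ^ 2 := by
        gcongr
    _ = 2 / √Q * (1 / (d * √d)) := by
        rw [hd]; field_simp

lemma abs_tsum_moebius_mul_log_sub_log_div_sq_tail_le {Q : ℕ} (hQ : 0 < Q) :
    |∑' i : ℕ, (μ (i + (Q + 1)) : ℝ) * (Real.log Q - Real.log (i + (Q + 1) : ℕ))
      / ((i + (Q + 1) : ℕ) : ℝ) ^ 2| ≤ 4 / Q := by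
  have hsum := ((summable_nat_add_iff (Q + 1)).2
    (hasSum_moebius_mul_log_sub_log_div_sq Q).summable).abs
  have hQ0 : (0 : ℝ) < Q := by exact_mod_cast hQ
  refine (abs_tsum_le_tsum_abs hsum).trans
    (Real.tsum_le_of_sum_range_le (fun _ ↦ abs_nonneg _) fun n ↦ ?_)
  calc _ ≤ ∑ i ∈ range n, 2 / √Q * (1 / ((Q + i + 1 : ℝ) * √(Q + i + 1))) :=
        sum_le_sum fun i _ ↦ by
          simpa [add_comm, add_left_comm, add_assoc] using
            abs_moebius_mul_log_sub_log_div_sq_le hQ (by omega : Q ≤ i + (Q + 1))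
    _ ≤ 2 / √Q * (2 / √Q) := by
        rw [← mul_sum]; gcongr; exact sum_range_inv_mul_sqrt_le hQ0 n
    _ = 4 / Q := by
        field_simp; rw [Real.sq_sqrt hQ0.le]; ring

theorem moebius_log_floor_sum_estimate (Q : ℕ) (hQ : 2 ≤ Q) :
    |(∑ d ∈ Finset.Icc 1 Q,
        (moebius d : ℝ) * Real.log ((Q / d : ℕ) : ℝ) / ((d : ℝ) ^ 4 * ((Q / d : ℕ) : ℝ) ^ 2))
      - 6 * Real.log Q / (Real.pi ^ 2 * (Q : ℝ) ^ 2)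
      + zetaDeriv2 / ((Q : ℝ) ^ 2 * (Real.pi ^ 2 / 6) ^ 2)| ≤
    (16 * (Real.log Q) ^ 2 + 12 * Real.log Q + 64) / (Q : ℝ) ^ 3 := by
  set F : ℕ → ℝ := fun d ↦ (μ d : ℝ) * (Real.log Q - Real.log d) / (d : ℝ) ^ 2
  have hF := hasSum_moebius_mul_log_sub_log_div_sq Q
  have hsplit : ∑ d ∈ Icc 1 Q, F d + ∑' i, F (i + (Q + 1))
      = 6 * Real.log Q / π ^ 2 - zetaDeriv2 / (π ^ 2 / 6) ^ 2 := by
    rw [← hF.tsum_eq, ← hF.summable.sum_add_tsum_nat_add (Q + 1), range_eq_Ico,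
      sum_eq_sum_Ico_succ_bot (by omega : 0 < Q + 1), zero_add, Ico_add_one_right_eq_Icc]
    simp [F]
  have hhead := abs_sum_moebius_floor_sub_le Q
  have htail := abs_tsum_moebius_mul_log_sub_log_div_sq_tail_le (by omega : 0 < Q)
  rw [sum_sub_distrib, ← sum_div] at hhead
  have hL := Real.log_natCast_nonneg Q
  calc _ = |(∑ d ∈ Icc 1 Q, (μ d : ℝ) * Real.log ((Q / d : ℕ) : ℝ)
          / ((d : ℝ) ^ 4 * ((Q / d : ℕ) : ℝ) ^ 2) - (∑ d ∈ Icc 1 Q, F d) / (Q : ℝ) ^ 2)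
        - (∑' i, F (i + (Q + 1))) / (Q : ℝ) ^ 2| := by
        rw [eq_sub_of_add_eq' hsplit]; congr 1; field_simp; ring
    _ ≤ (8 * Real.log Q + 2) * (1 + Real.log Q) / (Q : ℝ) ^ 3 + 4 / (Q : ℝ) ^ 3 := by
        refine (abs_sub _ _).trans (add_le_add hhead ?_)
        rw [abs_div, abs_of_pos (by positivity : (0 : ℝ) < Q ^ 2),
          show (Q : ℝ) ^ 3 = Q * Q ^ 2 by ring, ← div_div]
        gcongr
    _ ≤ _ := by
        rw [← add_div]
        exact div_le_div_of_nonneg_right (by nlinarith) (by positivity)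
end
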